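/- Suppose 0 < β < 1/(2N+1), and let t = (t_0, t_1, …, t_m) ∈ ℝ^{m+1} with 0 = t_0 < t_1 < … < t_m. Then Γ_t is a self-similar set if and only if there exists a finite set 𝒢 of similitudes g(x) = r x + b (with 0 < |r| < 1) such that ⋃_{g∈𝒢} g(Γ_t) = Γ. -/

import Mathlib

noncomputable section

namespace HSCantor

/-- A `D`-coding of `x`: a digit sequence `c` with digits in `D ⊆ ℤ` such that
`x = (1-β)/N · Σ_{k=1}^∞ c_k β^{k-1}` (here indexed from `k = 0`). -/
def IsCoding (N : ℕ) (β : ℝ) (D : Set ℤ) (x : ℝ) (c : ℕ → ℤ) : Prop :=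
  (∀ k, c k ∈ D) ∧ x = (1 - β) / N * ∑' k : ℕ, (c k : ℝ) * β ^ k

/-- The set `Γ_{β,D}` for a digit set `D ⊆ ℤ`. -/
def cantorD (N : ℕ) (β : ℝ) (D : Set ℤ) : Set ℝ := { x | ∃ c, IsCoding N β D x c }

/-- The homogeneous symmetric Cantor set `Γ = Γ_{β,{0,1,…,N}}`. -/
def Gamma (N : ℕ) (β : ℝ) : Set ℝ := cantorD N β (Set.Icc 0 (N : ℤ))

/-- `E ⊆ ℝ` is a self-similar set: it is nonempty, compact, and is the union of its
images under finitely many contracting similitudes `x ↦ r x + b`, `0 < |r| < 1`. -/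
def IsSelfSimilar (E : Set ℝ) : Prop :=
  E.Nonempty ∧ IsCompact E ∧ ∃ F : Finset (ℝ × ℝ),
    (∀ p ∈ F, 0 < |p.1| ∧ |p.1| < 1) ∧
    E = ⋃ p ∈ F, (fun x => p.1 * x + p.2) '' E

/-- `Γ_t = ⋃_{j=0}^m (Γ + t_j)`. -/
def GammaT (N : ℕ) (β : ℝ) {m : ℕ} (t : Fin (m + 1) → ℝ) : Set ℝ :=
  ⋃ j, (fun x => x + t j) '' Gamma N β

/-- The set `T = ⋃_{n≥1} { (1-β)/N · Σ_{k=1}^n j_k β^{-k} : j_k ∈ {0,…,N} }`. -/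
def Tset (N : ℕ) (β : ℝ) : Set ℝ :=
  { x | ∃ n : ℕ, 1 ≤ n ∧ ∃ c : ℕ → ℕ, (∀ k, c k ≤ N) ∧
      x = (1 - β) / N * ∑ k ∈ Finset.Icc 1 n, (c k : ℝ) * β ^ (-(k : ℤ)) }

/-- `d` is a digit representation of the translation vector `t` with `τ` digits:
`t_j = (1-β)/N · Σ_{k=1}^τ d_{j,k} β^{-k}` with all digits in `{0,…,N}`. -/
def IsDigitRep (N : ℕ) (β : ℝ) {m : ℕ} (t : Fin (m + 1) → ℝ) (τ : ℕ)
    (d : Fin (m + 1) → ℕ → ℕ) : Prop :=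
  (∀ j k, d j k ≤ N) ∧
    ∀ j, t j = (1 - β) / N * ∑ k ∈ Finset.Icc 1 τ, (d j k : ℝ) * β ^ (-(k : ℤ))

/-- `d` is a digit representation of `t` with `τ = τ_t` digits, `τ_t` minimal. -/
def IsMinimalRep (N : ℕ) (β : ℝ) {m : ℕ} (t : Fin (m + 1) → ℝ) (τ : ℕ)
    (d : Fin (m + 1) → ℕ → ℕ) : Prop :=
  IsDigitRep N β t τ d ∧ ∀ τ' < τ, ∀ d', ¬ IsDigitRep N β t τ' d'

/-- `s_k = max_{0 ≤ j ≤ m} t_{j,k}`. -/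
def digitSup {m : ℕ} (d : Fin (m + 1) → ℕ → ℕ) (k : ℕ) : ℕ :=
  Finset.univ.sup fun j => d j k

/-- Words of length `n` over the alphabet `{0,1,…,N}`, as lists of naturals. -/
def Words (N n : ℕ) : Set (List ℕ) := { w | w.length = n ∧ ∀ x ∈ w, x ≤ N }

/-- `Ω_t^n`: words `i_1 … i_n ∈ {0,…,N}^n` with `i_{n+1-k} ≤ N - s_k` for `1 ≤ k ≤ τ`.
(A list `w = [i_1, …, i_n]` satisfies `i_{n+1-k} = w.getD (n-k) 0`.) -/
def Omega (N τ : ℕ) (s : ℕ → ℕ) (n : ℕ) : Set (List ℕ) :=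
  { w | w ∈ Words N n ∧ ∀ k, 1 ≤ k → k ≤ τ → w.getD (n - k) 0 + s k ≤ N }

/-- `Ω̂_t^n`: words `i_1 … i_n ∈ {0,…,N}^n` with `i_{n+1-k} ≥ s_k` for `1 ≤ k ≤ τ`. -/
def OmegaHat (N τ : ℕ) (s : ℕ → ℕ) (n : ℕ) : Set (List ℕ) :=
  { w | w ∈ Words N n ∧ ∀ k, 1 ≤ k → k ≤ τ → s k ≤ w.getD (n - k) 0 }

/-- `W_t^τ = A_t^τ ∪ Â_t^τ`: words obtained from a word in `Ω_t^τ` (resp. `Ω̂_t^τ`)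
by adding (resp. subtracting) the digits of some `t_j` to the last `τ` positions. -/
def Wset (N : ℕ) {m : ℕ} (τ : ℕ) (d : Fin (m + 1) → ℕ → ℕ) : Set (List ℕ) :=
  { v | ∃ w ∈ Omega N τ (digitSup d) τ, ∃ j : Fin (m + 1),
      v = List.ofFn fun idx : Fin τ => w.getD idx 0 + d j (τ - (idx : ℕ)) } ∪
  { v | ∃ w ∈ OmegaHat N τ (digitSup d) τ, ∃ j : Fin (m + 1),
      v = List.ofFn fun idx : Fin τ => w.getD idx 0 - d j (τ - (idx : ℕ)) }

/-- The symbolic admissibility condition: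
`⋃_{n=τ}^ℓ {0,…,N}^{n-τ} × W_t^τ × {0,…,N}^{ℓ-n} = {0,…,N}^ℓ` for some `ℓ ≥ τ`. -/
def AdmissibleWith (N : ℕ) {m : ℕ} (τ : ℕ) (d : Fin (m + 1) → ℕ → ℕ) : Prop :=
  ∃ ℓ, τ ≤ ℓ ∧
    (⋃ n ∈ Finset.Icc τ ℓ,
      { z : List ℕ | ∃ u ∈ Words N (n - τ), ∃ w ∈ Wset N τ d, ∃ v ∈ Words N (ℓ - n),
          z = u ++ w ++ v }) = Words N ℓ

/-- `t` is an admissible translation vector. -/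
def IsAdmissible (N : ℕ) (β : ℝ) {m : ℕ} (t : Fin (m + 1) → ℝ) : Prop :=
  (∀ j, t j ∈ Tset N β) ∧
    ∃ τ d, IsMinimalRep N β t τ d ∧ AdmissibleWith N τ d

/-- The vertex set `V_t = {0,…,N}^τ \ W_t^τ` of the directed graph `G_t`. -/
def Vset (N : ℕ) {m : ℕ} (τ : ℕ) (d : Fin (m + 1) → ℕ → ℕ) : Set (List ℕ) :=
  Words N τ \ Wset N τ d

/-- The graph on `V` with an edge `i → j` iff `i_2 … i_τ = j_1 … j_{τ-1}` has a cycle: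
a directed path of positive length starting and ending at the same vertex. -/
def HasCycle (V : Set (List ℕ)) : Prop :=
  ∃ (L : ℕ) (p : ℕ → List ℕ), 0 < L ∧ (∀ i ≤ L, p i ∈ V) ∧
    (∀ i < L, (p i).drop 1 = (p (i + 1)).dropLast) ∧ p 0 = p L

open Classical in
/-- The adjacency matrix of the directed graph `G_t`, indexed by all words of length `τ`
over `{0,…,N}`; its `(i,j)` entry is `1` exactly when `i, j ∈ V_t` and there is a
directed edge `i → j`, and the rows and columns outside `V_t` are zero. -/
def adjMat (N τ : ℕ) (V : Set (List ℕ)) :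
    Matrix (Fin τ → Fin (N + 1)) (Fin τ → Fin (N + 1)) ℕ :=
  fun i j =>
    if (List.ofFn fun k => (i k : ℕ)) ∈ V ∧ (List.ofFn fun k => (j k : ℕ)) ∈ V ∧
        (List.ofFn fun k => (i k : ℕ)).drop 1 = (List.ofFn fun k => (j k : ℕ)).dropLast
    then 1 else 0

/-- `φ_i(x) = βx + i(1-β)/N`. -/
def phi (N : ℕ) (β : ℝ) (i : ℕ) (x : ℝ) : ℝ := β * x + i * (1 - β) / N

/-- `φ_{i_1 … i_n} = φ_{i_1} ∘ ⋯ ∘ φ_{i_n}`. -/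
def phiWord (N : ℕ) (β : ℝ) (w : List ℕ) (x : ℝ) : ℝ := w.foldr (phi N β) x

/-- The conjugate translation vector `t̂_j = t_m - t_{m-j}`. -/
def conj {m : ℕ} (t : Fin (m + 1) → ℝ) : Fin (m + 1) → ℝ :=
  fun j => t (Fin.last m) - t ⟨m - (j : ℕ), Nat.lt_succ_of_le (Nat.sub_le m j)⟩


/-! ### Auxiliary lemmas -/

section Aux

open Set MeasureTheory

lemma beta_lt_one {N : ℕ} {β : ℝ} (hβ0 : 0 < β) (hβ1 : β < 1 / (2 * N + 1)) : β < 1 := by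
  have h1 : (0:ℝ) < 2 * N + 1 := by positivity
  have : (1:ℝ) / (2 * N + 1) ≤ 1 := by
    rw [div_le_one h1]; have : (0:ℝ) ≤ N := Nat.cast_nonneg N; linarith
  linarith

lemma beta_key {N : ℕ} {β : ℝ} (hN : 0 < N) (hβ0 : 0 < β) (hβ1 : β < 1 / (2 * N + 1)) :
    ((N : ℝ) + 1) * β < 1 := by
  have h1 : (0:ℝ) < 2 * N + 1 := by positivity
  have hNR : (1:ℝ) ≤ N := by exact_mod_cast hN
  have h2 : β * (2 * N + 1) < 1 := by
    calc β * (2 * N + 1) < (1 / (2 * N + 1)) * (2 * N + 1) := by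
          apply mul_lt_mul_of_pos_right hβ1 h1
      _ = 1 := by field_simp
  nlinarith

lemma summable_digits {β : ℝ} (hβ0 : 0 < β) (hβ1 : β < 1) (a : ℕ → ℝ) (C : ℝ)
    (h : ∀ k, |a k| ≤ C) : Summable fun k => a k * β ^ k := by
  apply Summable.of_norm
  apply Summable.of_nonneg_of_le (fun k => norm_nonneg _) (fun k => ?_)
    ((summable_geometric_of_lt_one hβ0.le hβ1).mul_left C)
  have hβk : (0:ℝ) ≤ β ^ k := by positivity
  calc ‖a k * β ^ k‖ = |a k| * β ^ k := by
        rw [norm_mul, Real.norm_eq_abs, Real.norm_eq_abs, abs_of_nonneg hβk]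
    _ ≤ C * β ^ k := by apply mul_le_mul_of_nonneg_right (h k) hβk

lemma mem_gamma_iff {N : ℕ} {β : ℝ} {x : ℝ} :
    x ∈ Gamma N β ↔ ∃ c : ℕ → ℤ, (∀ k, 0 ≤ c k ∧ c k ≤ (N : ℤ)) ∧
      x = (1 - β) / N * ∑' k : ℕ, (c k : ℝ) * β ^ k := by
  constructor
  · rintro ⟨c, hc, rfl⟩
    exact ⟨c, fun k => Set.mem_Icc.1 (hc k), rfl⟩
  · rintro ⟨c, hc, rfl⟩
    exact ⟨c, fun k => Set.mem_Icc.2 (hc k), rfl⟩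

lemma digit_abs_le {N : ℕ} {c : ℕ → ℤ} (hc : ∀ k, 0 ≤ c k ∧ c k ≤ (N : ℤ)) (k : ℕ) :
    |((c k : ℤ) : ℝ)| ≤ (N : ℝ) := by
  rw [abs_of_nonneg (by exact_mod_cast (hc k).1)]
  exact_mod_cast (hc k).2

lemma summable_digits' {N : ℕ} {β : ℝ} (hβ0 : 0 < β) (hβ1 : β < 1) {c : ℕ → ℤ}
    (hc : ∀ k, 0 ≤ c k ∧ c k ≤ (N : ℤ)) : Summable fun k => ((c k : ℤ) : ℝ) * β ^ k :=
  summable_digits hβ0 hβ1 _ _ (digit_abs_le hc)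

lemma zero_mem_gamma {N : ℕ} {β : ℝ} : (0 : ℝ) ∈ Gamma N β := by
  rw [mem_gamma_iff]
  refine ⟨fun _ => 0, fun k => ⟨le_refl _, by positivity⟩, ?_⟩
  simp

lemma gamma_subset_Icc {N : ℕ} {β : ℝ} (hN : 0 < N) (hβ0 : 0 < β) (hβ1 : β < 1) :
    Gamma N β ⊆ Set.Icc 0 1 := by
  rintro x hx
  rw [mem_gamma_iff] at hx
  obtain ⟨c, hc, rfl⟩ := hx
  have hNR : (0:ℝ) < N := by exact_mod_cast hN
  have h1β : (0:ℝ) < 1 - β := by linarith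
  have hco : (0:ℝ) < (1 - β) / N := by positivity
  have hterm : ∀ k, (0:ℝ) ≤ ((c k : ℤ) : ℝ) * β ^ k := by
    intro k
    have h1 : (0:ℝ) ≤ ((c k : ℤ) : ℝ) := by exact_mod_cast (hc k).1
    positivity
  have hS0 : (0:ℝ) ≤ ∑' k : ℕ, ((c k : ℤ) : ℝ) * β ^ k := tsum_nonneg hterm
  have hS1 : ∑' k : ℕ, ((c k : ℤ) : ℝ) * β ^ k ≤ (N : ℝ) * (1 - β)⁻¹ := by
    have hgeom : Summable fun k : ℕ => (N : ℝ) * β ^ k :=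
      (summable_geometric_of_lt_one hβ0.le hβ1).mul_left _
    calc ∑' k : ℕ, ((c k : ℤ) : ℝ) * β ^ k ≤ ∑' k : ℕ, (N : ℝ) * β ^ k := by
          apply Summable.tsum_le_tsum (fun k => ?_) (summable_digits' hβ0 hβ1 hc) hgeom
          have hβk : (0:ℝ) ≤ β ^ k := by positivity
          apply mul_le_mul_of_nonneg_right _ hβk
          exact_mod_cast (hc k).2
      _ = (N : ℝ) * (1 - β)⁻¹ := by rw [tsum_mul_left, tsum_geometric_of_lt_one hβ0.le hβ1]
  constructor
  · positivity
  · calc (1 - β) / N * ∑' k : ℕ, ((c k : ℤ) : ℝ) * β ^ k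
        ≤ (1 - β) / N * ((N : ℝ) * (1 - β)⁻¹) := by
          apply mul_le_mul_of_nonneg_left hS1 hco.le
      _ = 1 := by field_simp

/-- Adding a leading digit. -/
lemma mem_gamma_cons {N : ℕ} {β : ℝ} (hβ0 : 0 < β) (hβ1 : β < 1)
    {i : ℤ} (h0 : 0 ≤ i) (hi : i ≤ (N : ℤ)) {y : ℝ} (hy : y ∈ Gamma N β) :
    β * y + (i : ℝ) * (1 - β) / N ∈ Gamma N β := by
  rw [mem_gamma_iff] at hy ⊢
  obtain ⟨c, hc, rfl⟩ := hy
  set c' : ℕ → ℤ := fun k => Nat.casesOn k i c with hc'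
  have hc'mem : ∀ k, 0 ≤ c' k ∧ c' k ≤ (N : ℤ) := by
    intro k; cases k with
    | zero => exact ⟨h0, hi⟩
    | succ k => exact hc k
  refine ⟨c', hc'mem, ?_⟩
  have hsum : Summable fun k => ((c' k : ℤ) : ℝ) * β ^ k := summable_digits' hβ0 hβ1 hc'mem
  have hshift : ∑' k : ℕ, ((c' k : ℤ) : ℝ) * β ^ k
      = (i : ℝ) + β * ∑' k : ℕ, ((c k : ℤ) : ℝ) * β ^ k := by
    rw [Summable.tsum_eq_zero_add hsum]
    have h1 : ((c' 0 : ℤ) : ℝ) * β ^ 0 = (i : ℝ) := by simp [hc']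
    have h2 : ∀ k : ℕ, ((c' (k + 1) : ℤ) : ℝ) * β ^ (k + 1)
        = β * (((c k : ℤ) : ℝ) * β ^ k) := by
      intro k; simp [hc', pow_succ]; ring
    rw [h1]
    congr 1
    rw [← tsum_mul_left]
    exact tsum_congr h2
  rw [hshift]; ring

/-- Extracting the leading digit. -/
lemma gamma_split {N : ℕ} {β : ℝ} (hβ0 : 0 < β) (hβ1 : β < 1) {x : ℝ}
    (hx : x ∈ Gamma N β) :
    ∃ i : ℤ, 0 ≤ i ∧ i ≤ (N : ℤ) ∧ ∃ y ∈ Gamma N β, x = β * y + (i : ℝ) * (1 - β) / N := by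
  rw [mem_gamma_iff] at hx
  obtain ⟨c, hc, rfl⟩ := hx
  refine ⟨c 0, (hc 0).1, (hc 0).2, (1 - β) / N * ∑' k : ℕ, ((c (k+1) : ℤ) : ℝ) * β ^ k, ?_, ?_⟩
  · rw [mem_gamma_iff]; exact ⟨fun k => c (k+1), fun k => hc (k+1), rfl⟩
  · have hsum : Summable fun k => ((c k : ℤ) : ℝ) * β ^ k := summable_digits' hβ0 hβ1 hc
    rw [Summable.tsum_eq_zero_add hsum]
    have h2 : ∀ k : ℕ, ((c (k + 1) : ℤ) : ℝ) * β ^ (k + 1)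
        = β * (((c (k+1) : ℤ) : ℝ) * β ^ k) := by
      intro k; rw [pow_succ]; ring
    have : ∑' k : ℕ, ((c (k+1) : ℤ) : ℝ) * β ^ (k+1)
        = β * ∑' k : ℕ, ((c (k+1) : ℤ) : ℝ) * β ^ k := by
      rw [← tsum_mul_left]; exact tsum_congr h2
    rw [this]; simp; ring

lemma beta_mul_mem_gamma {N : ℕ} {β : ℝ} (hβ0 : 0 < β) (hβ1 : β < 1) {y : ℝ}
    (hy : y ∈ Gamma N β) : β * y ∈ Gamma N β := by
  have := mem_gamma_cons (N := N) hβ0 hβ1 (le_refl (0:ℤ))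
    (by exact_mod_cast Nat.zero_le N) hy
  simpa using this

lemma pow_mul_mem_gamma {N : ℕ} {β : ℝ} (hβ0 : 0 < β) (hβ1 : β < 1) (P : ℕ) {y : ℝ}
    (hy : y ∈ Gamma N β) : β ^ P * y ∈ Gamma N β := by
  induction P with
  | zero => simpa using hy
  | succ P ih =>
      have := beta_mul_mem_gamma hβ0 hβ1 ih
      rw [← mul_assoc, ← pow_succ'] at this
      exact this

lemma gamma_split_small {N : ℕ} {β : ℝ} (hN : 0 < N) (hβ0 : 0 < β) (hβ1 : β < 1)
    {x : ℝ} (hx : x ∈ Gamma N β) (hxs : x < (1 - β) / N) :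
    ∃ y ∈ Gamma N β, x = β * y := by
  obtain ⟨i, h0, hi, y, hy, rfl⟩ := gamma_split hβ0 hβ1 hx
  have hy0 : 0 ≤ y := (gamma_subset_Icc hN hβ0 hβ1 hy).1
  have hNR : (0:ℝ) < N := by exact_mod_cast hN
  have hco : (0:ℝ) < (1 - β) / N := by
    have : (0:ℝ) < 1 - β := by linarith
    positivity
  have hi0 : i = 0 := by
    by_contra h
    have h1 : (1:ℤ) ≤ i := lt_of_le_of_ne h0 (Ne.symm h)
    have h1R : (1:ℝ) ≤ (i:ℝ) := by exact_mod_cast h1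
    have : (1 - β) / N ≤ (i : ℝ) * (1 - β) / N := by
      rw [mul_div_assoc]
      nlinarith
    nlinarith [mul_nonneg hβ0.le hy0]
  refine ⟨y, hy, ?_⟩
  rw [hi0]; simp

lemma gamma_scale_small {N : ℕ} {β : ℝ} (hN : 0 < N) (hβ0 : 0 < β) (hβ1 : β < 1)
    (q : ℕ) :
    ∀ x ∈ Gamma N β, x < β ^ q * ((1 - β) / N) → ∃ y ∈ Gamma N β, x = β ^ (q + 1) * y := by
  induction q with
  | zero =>
      intro x hx hxs
      rw [pow_zero, one_mul] at hxs
      obtain ⟨y, hy, rfl⟩ := gamma_split_small hN hβ0 hβ1 hx hxs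
      exact ⟨y, hy, by ring⟩
  | succ q ih =>
      intro x hx hxs
      have hNR : (0:ℝ) < N := by exact_mod_cast hN
      have hco : (0:ℝ) < (1 - β) / N := by
        have : (0:ℝ) < 1 - β := by linarith
        positivity
      have hsmall : x < (1 - β) / N := by
        have hβq : β ^ (q+1) ≤ 1 := pow_le_one₀ hβ0.le hβ1.le
        nlinarith
      obtain ⟨y, hy, rfl⟩ := gamma_split_small hN hβ0 hβ1 hx hsmall
      have hys : y < β ^ q * ((1 - β) / N) := by
        have := hxs
        rw [pow_succ] at this
        nlinarith
      obtain ⟨z, hz, rfl⟩ := ih y hy hys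
      exact ⟨z, hz, by ring⟩


lemma gamma_eq_range {N : ℕ} {β : ℝ} :
    Gamma N β = Set.range (fun c : ℕ → Set.Icc (0:ℤ) (N:ℤ) =>
      (1 - β) / N * ∑' k : ℕ, ((c k : ℤ) : ℝ) * β ^ k) := by
  ext x
  constructor
  · rintro ⟨c, hc, rfl⟩
    exact ⟨fun k => ⟨c k, hc k⟩, rfl⟩
  · rintro ⟨c, rfl⟩
    exact ⟨fun k => (c k : ℤ), fun k => (c k).2, rfl⟩

lemma gamma_isCompact {N : ℕ} {β : ℝ} (hβ0 : 0 < β) (hβ1 : β < 1) :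
    IsCompact (Gamma N β) := by
  rw [gamma_eq_range]
  haveI : Finite (Set.Icc (0:ℤ) (N:ℤ)) := (Set.finite_Icc _ _).to_subtype
  apply isCompact_range
  apply Continuous.mul continuous_const
  apply continuous_tsum (u := fun k => (N:ℝ) * β ^ k)
  · intro k
    exact Continuous.comp
      (g := fun v : Set.Icc (0:ℤ) (N:ℤ) => ((v : ℤ) : ℝ) * β ^ k)
      continuous_of_discreteTopology (continuous_apply k)
  · exact (summable_geometric_of_lt_one hβ0.le hβ1).mul_left _
  · intro k c
    have hβk : (0:ℝ) ≤ β ^ k := by positivity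
    have h1 : |((c k : ℤ) : ℝ)| ≤ (N : ℝ) := by
      rw [abs_of_nonneg (by exact_mod_cast (c k).2.1)]
      exact_mod_cast (c k).2.2
    calc ‖((c k : ℤ) : ℝ) * β ^ k‖ = |((c k : ℤ) : ℝ)| * β ^ k := by
          rw [norm_mul, Real.norm_eq_abs, Real.norm_eq_abs, abs_of_nonneg hβk]
      _ ≤ (N:ℝ) * β ^ k := mul_le_mul_of_nonneg_right h1 hβk

section GammaT

variable {N : ℕ} {β : ℝ} {m : ℕ} {t : Fin (m + 1) → ℝ}

lemma t_nonneg (ht0 : t 0 = 0) (hmono : StrictMono t) (j : Fin (m + 1)) : 0 ≤ t j := by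
  rw [← ht0]; exact hmono.monotone (Fin.zero_le j)

lemma gamma_subset_gammaT (ht0 : t 0 = 0) : Gamma N β ⊆ GammaT N β t := by
  intro x hx
  refine Set.mem_iUnion.2 ⟨0, ⟨x, hx, by simp [ht0]⟩⟩

lemma gammaT_nonempty (ht0 : t 0 = 0) : (GammaT N β t).Nonempty :=
  ⟨0, gamma_subset_gammaT ht0 zero_mem_gamma⟩

lemma gammaT_isCompact (hβ0 : 0 < β) (hβ1 : β < 1) : IsCompact (GammaT N β t) := by
  apply isCompact_iUnion
  intro j
  exact (gamma_isCompact hβ0 hβ1).image (continuous_add_right (t j))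

lemma gammaT_subset_Icc (hN : 0 < N) (hβ0 : 0 < β) (hβ1 : β < 1)
    (ht0 : t 0 = 0) (hmono : StrictMono t) :
    GammaT N β t ⊆ Set.Icc 0 (1 + t (Fin.last m)) := by
  rintro x hx
  obtain ⟨j, y, hy, rfl⟩ := Set.mem_iUnion.1 hx
  have h1 := gamma_subset_Icc hN hβ0 hβ1 hy
  have h2 : t j ≤ t (Fin.last m) := hmono.monotone (Fin.le_last j)
  have h3 := t_nonneg ht0 hmono j
  simp only [Set.mem_Icc] at h1 ⊢
  constructor
  · have := h1.1; linarith
  · have := h1.2; linarith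

/-- Positive threshold below all positive translations. -/
lemma exists_eps (ht0 : t 0 = 0) (hmono : StrictMono t) :
    ∃ ε : ℝ, 0 < ε ∧ ∀ j : Fin (m + 1), j ≠ 0 → ε ≤ t j := by
  by_cases hm : m = 0
  · subst hm
    refine ⟨1, one_pos, fun j hj => absurd (Fin.ext ?_) hj⟩
    have := j.isLt
    omega
  · have h1m : 1 ≤ m := Nat.one_le_iff_ne_zero.2 hm
    refine ⟨t ⟨1, by omega⟩, ?_, ?_⟩
    · rw [← ht0]
      exact hmono (by simp [Fin.lt_def])
    · intro j hj
      apply hmono.monotone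
      have : (1 : ℕ) ≤ (j : ℕ) := by
        rcases Nat.eq_zero_or_pos (j : ℕ) with h | h
        · exact absurd (Fin.ext h) hj
        · exact h
      simpa [Fin.le_def] using this

/-- Near zero, `Γ_t` coincides with `Γ`. -/
lemma gammaT_small_mem_gamma (hN : 0 < N) (hβ0 : 0 < β) (hβ1 : β < 1)
    (ht0 : t 0 = 0) {ε : ℝ} (hε : ∀ j : Fin (m + 1), j ≠ 0 → ε ≤ t j)
    {x : ℝ} (hx : x ∈ GammaT N β t) (hxε : x < ε) : x ∈ Gamma N β := by
  obtain ⟨j, y, hy, rfl⟩ := Set.mem_iUnion.1 hx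
  by_cases hj : j = 0
  · subst hj
    simpa [ht0] using hy
  · exfalso
    have h1 := (gamma_subset_Icc hN hβ0 hβ1 hy).1
    have h2 := hε j hj
    dsimp only at hxε
    linarith

end GammaT

section Volume

open MeasureTheory Pointwise

lemma volume_gamma_zero {N : ℕ} {β : ℝ} (hN : 0 < N) (hβ0 : 0 < β)
    (hβ1 : ((N:ℝ) + 1) * β < 1) : volume (Gamma N β) = 0 := by
  have hNR : (0:ℝ) < N := by exact_mod_cast hN
  have hb1 : β < 1 := by nlinarith
  -- Γ is covered by N+1 affine images of itself
  have hcover : Gamma N β ⊆ ⋃ i ∈ Finset.range (N + 1),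
      (fun z => z + (i : ℝ) * (1 - β) / N) '' (β • Gamma N β) := by
    intro x hx
    obtain ⟨i, h0, hi, y, hy, rfl⟩ := gamma_split hβ0 hb1 hx
    refine Set.mem_iUnion₂.2 ⟨i.toNat, by rw [Finset.mem_range]; omega, ?_⟩
    refine ⟨β * y, ⟨y, hy, rfl⟩, ?_⟩
    have hcast : ((i.toNat : ℕ) : ℝ) = (i : ℝ) := by
      rw [← Int.cast_natCast, Int.toNat_of_nonneg h0]
    rw [hcast]
  have himg : ∀ i : ℕ, volume ((fun z => z + (i : ℝ) * (1 - β) / N) '' (β • Gamma N β))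
      = ENNReal.ofReal β * volume (Gamma N β) := by
    intro i
    rw [Set.image_add_right, measure_preimage_add_right]
    have := Measure.addHaar_smul_of_nonneg volume hβ0.le (Gamma N β)
    rwa [Module.finrank_self, pow_one] at this
  have hsub : volume (Gamma N β) ≤ (N + 1 : ℕ) * (ENNReal.ofReal β * volume (Gamma N β)) := by
    calc volume (Gamma N β) ≤ volume (⋃ i ∈ Finset.range (N + 1),
        (fun z => z + (i : ℝ) * (1 - β) / N) '' (β • Gamma N β)) := measure_mono hcover
      _ ≤ ∑ i ∈ Finset.range (N + 1),
          volume ((fun z => z + (i : ℝ) * (1 - β) / N) '' (β • Gamma N β)) :=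
        measure_biUnion_finset_le _ _
      _ = (N + 1 : ℕ) * (ENNReal.ofReal β * volume (Gamma N β)) := by
          rw [Finset.sum_congr rfl fun i _ => himg i]
          simp [Finset.sum_const]
  have hfin : volume (Gamma N β) ≤ 1 := by
    calc volume (Gamma N β) ≤ volume (Set.Icc (0:ℝ) 1) :=
          measure_mono (gamma_subset_Icc hN hβ0 hb1)
      _ = 1 := by rw [Real.volume_Icc]; norm_num
  set V := volume (Gamma N β) with hV
  have hVne : V ≠ ⊤ := ne_top_of_le_ne_top ENNReal.one_ne_top hfin
  by_contra hV0
  have hVpos : 0 < V.toReal := ENNReal.toReal_pos hV0 hVne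
  have hreal : V.toReal ≤ ((N:ℝ) + 1) * (β * V.toReal) := by
    have h1 : ((N + 1 : ℕ) * (ENNReal.ofReal β * V)).toReal
        = ((N:ℝ) + 1) * (β * V.toReal) := by
      rw [ENNReal.toReal_mul, ENNReal.toReal_mul, ENNReal.toReal_ofReal hβ0.le]
      simp only [ENNReal.toReal_natCast]
      push_cast
      ring
    calc V.toReal ≤ ((N + 1 : ℕ) * (ENNReal.ofReal β * V)).toReal := by
          apply ENNReal.toReal_mono _ hsub
          rw [← h1] at *
          apply ENNReal.mul_ne_top (by simp)
          exact ENNReal.mul_ne_top ENNReal.ofReal_ne_top hVne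
      _ = ((N:ℝ) + 1) * (β * V.toReal) := h1
  nlinarith

lemma volume_gammaT_zero {N : ℕ} {β : ℝ} {m : ℕ} {t : Fin (m + 1) → ℝ}
    (hN : 0 < N) (hβ0 : 0 < β) (hβ1 : ((N:ℝ) + 1) * β < 1) :
    volume (GammaT N β t) = 0 := by
  unfold GammaT
  apply le_antisymm _ (by simp)
  calc volume (⋃ j, (fun x => x + t j) '' Gamma N β) ≤ ∑' j : Fin (m + 1), volume ((fun x => x + t j) '' Gamma N β) :=
        measure_iUnion_le (μ := (volume : MeasureTheory.Measure ℝ)) _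
    _ = 0 := by
        convert tsum_zero with j
        rw [Set.image_add_right, measure_preimage_add_right]
        exact volume_gamma_zero hN hβ0 hβ1

/-- In any open interval we can find a subinterval missing a closed null set. -/
lemma exists_gap {K : Set ℝ} (hK : IsClosed K) (hvol : volume K = 0)
    {a b : ℝ} (hab : a < b) :
    ∃ u v : ℝ, a ≤ u ∧ u < v ∧ v ≤ b ∧ ∀ z ∈ K, z ∉ Set.Ioo u v := by
  have h1 : ¬ (Set.Ioo a b ⊆ K) := by
    intro h
    have : volume (Set.Ioo a b) ≤ volume K := measure_mono h
    rw [hvol, Real.volume_Ioo] at this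
    simp only [nonpos_iff_eq_zero, ENNReal.ofReal_eq_zero] at this
    linarith
  obtain ⟨x, hxI, hxK⟩ := Set.not_subset.1 h1
  obtain ⟨ε, hε0, hball⟩ := Metric.isOpen_iff.1 hK.isOpen_compl x hxK
  refine ⟨max a (x - ε), min b (x + ε), le_max_left _ _, ?_, min_le_left _ _, ?_⟩
  · rcases hxI with ⟨hax, hxb⟩
    simp only [max_lt_iff, lt_min_iff]
    exact ⟨⟨by linarith, by linarith⟩, by linarith, by linarith⟩
  · intro z hz hzI
    have hzb : z ∈ Metric.ball x ε := by
      rw [Real.ball_eq_Ioo]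
      rcases hzI with ⟨h1z, h2z⟩
      exact ⟨lt_of_le_of_lt (le_max_right _ _) h1z, lt_of_lt_of_le h2z (min_le_right _ _)⟩
    exact hball hzb hz

end Volume


section IFS

/-- The affine map determined by a pair `(r, b)`. -/
def aff (p : ℝ × ℝ) (x : ℝ) : ℝ := p.1 * x + p.2

/-- `n`-fold compositions of the maps in `F`. -/
def iterF (F : Finset (ℝ × ℝ)) : ℕ → Finset (ℝ × ℝ)
  | 0 => {((1 : ℝ), (0 : ℝ))}
  | n + 1 => (F ×ˢ iterF F n).image fun pq => (pq.1.1 * pq.2.1, pq.1.1 * pq.2.2 + pq.1.2)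

lemma aff_comp (p q : ℝ × ℝ) (x : ℝ) :
    aff p (aff q x) = aff (p.1 * q.1, p.1 * q.2 + p.2) x := by
  simp only [aff]; ring

lemma iter_cover {F : Finset (ℝ × ℝ)} {E : Set ℝ}
    (hE : E = ⋃ p ∈ F, aff p '' E) (n : ℕ) :
    E = ⋃ p ∈ iterF F n, aff p '' E := by
  induction n with
  | zero =>
      ext x
      simp only [iterF, Finset.mem_singleton, Set.mem_iUnion]
      constructor
      · intro hx
        exact ⟨(1, 0), rfl, ⟨x, hx, by simp [aff]⟩⟩
      · rintro ⟨p, rfl, y, hy, rfl⟩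
        simpa [aff] using hy
  | succ n ih =>
      ext x
      constructor
      · intro hx
        rw [hE] at hx
        obtain ⟨p, hp, hx2⟩ := Set.mem_iUnion₂.1 hx
        obtain ⟨y, hy, rfl⟩ := hx2
        rw [ih] at hy
        obtain ⟨q, hq, hy2⟩ := Set.mem_iUnion₂.1 hy
        obtain ⟨z, hz, rfl⟩ := hy2
        refine Set.mem_iUnion₂.2 ⟨(p.1 * q.1, p.1 * q.2 + p.2), ?_, ⟨z, hz, ?_⟩⟩
        · show _ ∈ iterF F (n + 1)
          simp only [iterF, Finset.mem_image, Finset.mem_product]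
          exact ⟨(p, q), ⟨hp, hq⟩, rfl⟩
        · exact (aff_comp p q z).symm
      · intro hx
        obtain ⟨r, hr, hx2⟩ := Set.mem_iUnion₂.1 hx
        obtain ⟨z, hz, rfl⟩ := hx2
        have hr2 : r ∈ (F ×ˢ iterF F n).image
            fun pq : (ℝ × ℝ) × ℝ × ℝ => (pq.1.1 * pq.2.1, pq.1.1 * pq.2.2 + pq.1.2) := hr
        rw [Finset.mem_image] at hr2
        obtain ⟨⟨p, q⟩, hpq, rfl⟩ := hr2
        obtain ⟨hp, hq⟩ := Finset.mem_product.1 hpq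
        have h1 : aff q z ∈ E := by
          rw [ih]
          exact Set.mem_iUnion₂.2 ⟨q, hq, ⟨z, hz, rfl⟩⟩
        have h2 : aff p (aff q z) ∈ E := by
          rw [hE]
          exact Set.mem_iUnion₂.2 ⟨p, hp, ⟨aff q z, h1, rfl⟩⟩
        rwa [aff_comp] at h2

lemma iter_bound {F : Finset (ℝ × ℝ)} {ρ : ℝ}
    (hρ : ∀ p ∈ F, |p.1| ≤ ρ) (hne : ∀ p ∈ F, p.1 ≠ 0) (n : ℕ) :
    ∀ p ∈ iterF F n, p.1 ≠ 0 ∧ |p.1| ≤ ρ ^ n := by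
  induction n with
  | zero =>
      intro p hp
      have : p = (1, 0) := Finset.mem_singleton.1 hp
      subst this
      norm_num
  | succ n ih =>
      intro p hp
      have hp2 : p ∈ (F ×ˢ iterF F n).image
          fun pq : (ℝ × ℝ) × ℝ × ℝ => (pq.1.1 * pq.2.1, pq.1.1 * pq.2.2 + pq.1.2) := hp
      rw [Finset.mem_image] at hp2
      obtain ⟨⟨a, b⟩, hab, rfl⟩ := hp2
      obtain ⟨ha, hb⟩ := Finset.mem_product.1 hab
      obtain ⟨hb0, hbρ⟩ := ih b hb
      have ha0 := hne a ha
      have haρ := hρ a ha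
      have hρ0 : 0 ≤ ρ := le_trans (abs_nonneg _) haρ
      refine ⟨mul_ne_zero ha0 hb0, ?_⟩
      show |a.1 * b.1| ≤ ρ ^ (n + 1)
      rw [abs_mul, pow_succ']
      exact mul_le_mul haρ hbρ (abs_nonneg _) hρ0

lemma aff_image_diam {p : ℝ × ℝ} {E : Set ℝ} {M : ℝ} (hE : E ⊆ Set.Icc 0 M)
    {y z : ℝ} (hy : y ∈ aff p '' E) (hz : z ∈ aff p '' E) : |z - y| ≤ |p.1| * M := by
  obtain ⟨a, ha, rfl⟩ := hy
  obtain ⟨b, hb, rfl⟩ := hz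
  obtain ⟨ha1, ha2⟩ := hE ha
  obtain ⟨hb1, hb2⟩ := hE hb
  have h1 : aff p b - aff p a = p.1 * (b - a) := by simp only [aff]; ring
  rw [h1, abs_mul]
  apply mul_le_mul_of_nonneg_left _ (abs_nonneg _)
  rw [abs_le]
  constructor <;> linarith

end IFS

end Aux

/-- Suppose `0 < β < 1/(2N+1)` and `t = (t_0,…,t_m)` with `0 = t_0 < ⋯ < t_m`.
Then `Γ_t` is a self-similar set iff there is a finite set `𝒢` of similitudes
`g(x) = r x + b` (with `0 < |r| < 1`) such that `⋃_{g ∈ 𝒢} g(Γ_t) = Γ`. -/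
theorem stmt11 (N : ℕ) (hN : 0 < N) (β : ℝ) (hβ0 : 0 < β) (hβ1 : β < 1 / (2 * N + 1))
    (m : ℕ) (t : Fin (m + 1) → ℝ) (ht0 : t 0 = 0) (hmono : StrictMono t) :
    IsSelfSimilar (GammaT N β t) ↔
      ∃ G : Finset (ℝ × ℝ), (∀ p ∈ G, 0 < |p.1| ∧ |p.1| < 1) ∧
        (⋃ p ∈ G, (fun x => p.1 * x + p.2) '' GammaT N β t) = Gamma N β := by
  have hb1 : β < 1 := beta_lt_one hβ0 hβ1
  have hkey : ((N:ℝ) + 1) * β < 1 := beta_key hN hβ0 hβ1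
  have hNR : (0:ℝ) < N := by exact_mod_cast hN
  have h1β : (0:ℝ) < 1 - β := by linarith
  constructor
  · -- the hard direction
    rintro ⟨hnem, hcomp, F, hF, hE⟩
    classical
    obtain ⟨ε, hε0, hεj⟩ := exists_eps ht0 hmono
    obtain ⟨q, hq⟩ := exists_pow_lt_of_lt_one (x := ε * N / (1 - β)) (by positivity) hb1
    have hqε : β ^ q * ((1 - β) / N) < ε := by
      have h2 : β ^ q * ((1-β)/N) < (ε * N / (1-β)) * ((1-β)/N) :=
        mul_lt_mul_of_pos_right hq (by positivity)
      calc β ^ q * ((1-β)/N) < (ε * N / (1-β)) * ((1-β)/N) := h2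
        _ = ε := by field_simp
    have hab : β ^ (q+1) < β ^ q * ((1 - β) / N) := by
      have hβlt : β < (1-β)/N := by
        rw [lt_div_iff₀ hNR]; nlinarith
      calc β ^ (q+1) = β ^ q * β := by rw [pow_succ]
        _ < β ^ q * ((1-β)/N) := by
            apply mul_lt_mul_of_pos_left hβlt (by positivity)
    obtain ⟨u, v, hau, huv, hvb, hgap⟩ := exists_gap
      hcomp.isClosed (volume_gammaT_zero hN hβ0 hkey) hab
    set c := (u + v) / 2 with hc
    have huc : u < c := by rw [hc]; linarith
    have hcv : c < v := by rw [hc]; linarith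
    have hPc : β ^ (q+1) ≤ c := le_trans hau huc.le
    have hcb : c < β ^ q * ((1-β)/N) := lt_of_lt_of_le hcv hvb
    have hcε : c < ε := lt_trans hcb hqε
    have hFne : F.Nonempty := by
      rcases Finset.eq_empty_or_nonempty F with h | h
      · exfalso
        rw [h] at hE
        simp only [Finset.notMem_empty, Set.iUnion_of_empty, Set.iUnion_empty] at hE
        exact hnem.ne_empty hE
      · exact h
    set ρ := F.sup' hFne fun p => |p.1| with hρdef
    have hρlt : ρ < 1 := (Finset.sup'_lt_iff hFne).2 fun p hp => (hF p hp).2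
    have hρle : ∀ p ∈ F, |p.1| ≤ ρ := by
      intro p hp
      rw [hρdef]
      exact Finset.le_sup' (fun p => |p.1|) hp
    have hρ0 : 0 ≤ ρ := by
      obtain ⟨p0, hp0⟩ := hFne
      exact le_trans (abs_nonneg _) (hρle p0 hp0)
    have hρne : ∀ p ∈ F, p.1 ≠ 0 := by
      intro p hp h
      have := (hF p hp).1
      rw [h] at this
      simp at this
    set M := 1 + t (Fin.last m) with hM
    have hMpos : 0 < M := by
      have := t_nonneg ht0 hmono (Fin.last m)
      rw [hM]; linarith
    have hEM : GammaT N β t ⊆ Set.Icc 0 M := gammaT_subset_Icc hN hβ0 hb1 ht0 hmono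
    obtain ⟨n1, hn1⟩ := exists_pow_lt_of_lt_one (x := β ^ (q+1)) (by positivity) hρlt
    obtain ⟨n2, hn2⟩ := exists_pow_lt_of_lt_one (x := (v - u) / 2 / M)
      (by apply div_pos (by linarith) hMpos) hρlt
    set n := max n1 n2 with hn
    have hρn1 : ρ ^ n < β ^ (q+1) :=
      lt_of_le_of_lt (pow_le_pow_of_le_one hρ0 hρlt.le (le_max_left _ _)) hn1
    have hρn2 : ρ ^ n * M < (v - u) / 2 := by
      have h3 : ρ ^ n < (v-u)/2 / M :=
        lt_of_le_of_lt (pow_le_pow_of_le_one hρ0 hρlt.le (le_max_right n1 n2)) hn2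
      calc ρ ^ n * M < ((v-u)/2/M) * M := mul_lt_mul_of_pos_right h3 hMpos
        _ = (v-u)/2 := by field_simp
    set A := (iterF F n).filter (fun p => ∃ z ∈ aff p '' GammaT N β t, z ≤ c) with hA
    have hEcov : GammaT N β t = ⋃ p ∈ iterF F n, aff p '' GammaT N β t := iter_cover hE n
    have hsubΓt : ∀ p ∈ iterF F n, aff p '' GammaT N β t ⊆ GammaT N β t := by
      intro p hp w hw
      have : w ∈ ⋃ p ∈ iterF F n, aff p '' GammaT N β t := Set.mem_iUnion₂.2 ⟨p, hp, hw⟩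
      rwa [← hEcov] at this
    have hkey1 : (⋃ p ∈ A, aff p '' GammaT N β t) = Gamma N β ∩ Set.Iic c := by
      apply Set.Subset.antisymm
      · rintro x hx
        obtain ⟨p, hp, hxp⟩ := Set.mem_iUnion₂.1 hx
        rw [hA, Finset.mem_filter] at hp
        obtain ⟨hpn, z0, hz0p, hz0c⟩ := hp
        have hz0Γt := hsubΓt p hpn hz0p
        have hz0u : z0 ≤ u := by
          by_contra h
          exact hgap z0 hz0Γt ⟨lt_of_not_ge h, lt_of_le_of_lt hz0c hcv⟩
        have hxΓt := hsubΓt p hpn hxp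
        have hdiam := aff_image_diam hEM hz0p hxp
        have hp1 : |p.1| ≤ ρ ^ n := (iter_bound hρle hρne n p hpn).2
        have h1 : |x - z0| ≤ ρ ^ n * M :=
          le_trans hdiam (mul_le_mul_of_nonneg_right hp1 hMpos.le)
        have habs := abs_le.1 h1
        have hxlt : x < c := by
          have h5 := habs.2
          have h6 : x ≤ u + ρ ^ n * M := by linarith
          calc x ≤ u + ρ ^ n * M := h6
            _ < u + (v - u) / 2 := by linarith [hρn2]
            _ = (u + v) / 2 := by ring
            _ = c := hc.symm
        have hxΓ : x ∈ Gamma N β :=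
          gammaT_small_mem_gamma hN hβ0 hb1 ht0 hεj hxΓt (lt_trans hxlt hcε)
        exact ⟨hxΓ, le_of_lt hxlt⟩
      · rintro x ⟨hxΓ, hxc⟩
        have hxΓt : x ∈ GammaT N β t := gamma_subset_gammaT ht0 hxΓ
        rw [hEcov] at hxΓt
        obtain ⟨p, hp, hxp⟩ := Set.mem_iUnion₂.1 hxΓt
        refine Set.mem_iUnion₂.2 ⟨p, ?_, hxp⟩
        rw [hA, Finset.mem_filter]
        exact ⟨hp, x, hxp, hxc⟩
    have hβP : (0:ℝ) < β ^ (q+1) := by positivity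
    refine ⟨A.image fun p => (p.1 / β ^ (q+1), p.2 / β ^ (q+1)), ?_, ?_⟩
    · rintro r hr
      rw [Finset.mem_image] at hr
      obtain ⟨p, hp, rfl⟩ := hr
      have hpn : p ∈ iterF F n := (Finset.mem_filter.1 (hA ▸ hp)).1
      obtain ⟨hp0, hpρ⟩ := iter_bound hρle hρne n p hpn
      constructor
      · show (0:ℝ) < |p.1 / β ^ (q+1)|
        rw [abs_div, abs_of_pos hβP]
        exact div_pos (abs_pos.2 hp0) hβP
      · show |p.1 / β ^ (q+1)| < 1
        rw [abs_div, abs_of_pos hβP, div_lt_one hβP]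
        exact lt_of_le_of_lt hpρ hρn1
    · ext x
      constructor
      · intro hx
        obtain ⟨r, hr, hx2⟩ := Set.mem_iUnion₂.1 hx
        obtain ⟨y, hy, hxy⟩ := hx2
        rw [Finset.mem_image] at hr
        obtain ⟨p, hpA, rfl⟩ := hr
        have h1 : aff p y = β ^ (q+1) * x := by
          rw [← hxy]
          show p.1 * y + p.2 = β ^ (q+1) * ((p.1 / β ^ (q+1)) * y + p.2 / β ^ (q+1))
          first
          | (field_simp; ring)
          | field_simp
        have h2 : β ^ (q+1) * x ∈ Gamma N β ∩ Set.Iic c := by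
          rw [← hkey1]
          exact Set.mem_iUnion₂.2 ⟨p, hpA, ⟨y, hy, h1⟩⟩
        have h3 : β ^ (q+1) * x < β ^ q * ((1-β)/N) := lt_of_le_of_lt h2.2 hcb
        obtain ⟨w, hw, hw2⟩ := gamma_scale_small hN hβ0 hb1 q _ h2.1 h3
        have hxw : x = w := mul_left_cancel₀ (ne_of_gt hβP) hw2
        rwa [hxw]
      · intro hx
        have hx1 : x ≤ 1 := (gamma_subset_Icc hN hβ0 hb1 hx).2
        have h2 : β ^ (q+1) * x ∈ Gamma N β ∩ Set.Iic c := by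
          refine ⟨pow_mul_mem_gamma hβ0 hb1 _ hx, ?_⟩
          have : β ^ (q+1) * x ≤ β ^ (q+1) := by nlinarith
          exact le_trans this hPc
        rw [← hkey1] at h2
        obtain ⟨p, hpA, hx2⟩ := Set.mem_iUnion₂.1 h2
        obtain ⟨y, hy, hyx⟩ := hx2
        refine Set.mem_iUnion₂.2 ⟨(p.1 / β^(q+1), p.2 / β^(q+1)),
          Finset.mem_image.2 ⟨p, hpA, rfl⟩, y, hy, ?_⟩
        show (p.1 / β ^ (q+1)) * y + p.2 / β ^ (q+1) = x
        have h4 : p.1 * y + p.2 = β ^ (q+1) * x := hyx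
        field_simp
        linarith [h4]
  · -- the easy direction
    rintro ⟨G, hG, hGeq⟩
    refine ⟨gammaT_nonempty ht0, gammaT_isCompact hβ0 hb1,
      Finset.image (fun jg : Fin (m+1) × (ℝ × ℝ) => (jg.2.1, jg.2.2 + t jg.1))
        (Finset.univ ×ˢ G), ?_, ?_⟩
    · rintro p hp
      rw [Finset.mem_image] at hp
      obtain ⟨⟨j, g⟩, hjg, rfl⟩ := hp
      exact hG g (Finset.mem_product.1 hjg).2
    · ext x
      constructor
      · intro hx
        obtain ⟨j, y, hy, rfl⟩ := Set.mem_iUnion.1 hx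
        rw [← hGeq] at hy
        obtain ⟨g, hg, hy2⟩ := Set.mem_iUnion₂.1 hy
        obtain ⟨z, hz, rfl⟩ := hy2
        refine Set.mem_iUnion₂.2 ⟨(g.1, g.2 + t j),
          Finset.mem_image.2 ⟨(j, g), Finset.mem_product.2 ⟨Finset.mem_univ _, hg⟩, rfl⟩,
          z, hz, ?_⟩
        show g.1 * z + (g.2 + t j) = (g.1 * z + g.2) + t j
        ring
      · intro hx
        obtain ⟨p, hp, hx2⟩ := Set.mem_iUnion₂.1 hx
        obtain ⟨z, hz, rfl⟩ := hx2
        rw [Finset.mem_image] at hp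
        obtain ⟨⟨j, g⟩, hjg, rfl⟩ := hp
        have hg := (Finset.mem_product.1 hjg).2
        refine Set.mem_iUnion.2 ⟨j, g.1 * z + g.2, ?_, ?_⟩
        · rw [← hGeq]
          exact Set.mem_iUnion₂.2 ⟨g, hg, z, hz, rfl⟩
        · show (g.1 * z + g.2) + t j = g.1 * z + (g.2 + t j)
          ring

end HSCantor
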